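/- Dyadic multiplier bound for the bilinear estimate: assume 0 < δ ≤ 1, 2m > 2 - δ, and 1/2 < b < min{1, (2m - 1/2)/(2m - δ + 1)}. Then there exist ε ∈ (0, 1/2) and C > 0 such that the following holds. Let N₁, N₂, N₃, L₁, L₂, L₃ be dyadic numbers (powers of 2, ≥ 1), let k₁, k₂, k₃ ∈ ℤ \ {0} with k₁ + k₂ + k₃ = 0 and τ₁, τ₂, τ₃ ∈ ℝ with τ₁ + τ₂ + τ₃ = 0, and suppose for each j: |k_j| ≤ 2 if N_j = 1 and N_j/2 < |k_j| < 2N_j if N_j ≥ 2; and |(τ_j - λ_{k_j})/⟨k_j⟩^δ| ≤ 2 if L_j = 1 and L_j/2 < |(τ_j - λ_{k_j})/⟨k_j⟩^δ| < 2L_j if L_j ≥ 2. Then there exist j₁ ∈ {1, 2, 3} and b' with 1/2 < b' ≤ b such that N₃^{1 - δ(b - 1/2) - 1 + b + ε} / (N₁^{δ/2}·N₂^{δ/2}·L₁^b·L₂^b·L₃^{1-b-ε}) ≤ C / (N_min^{1/2+ε}·N_{j₁}^{δ/2}·L_{j₁}^{b'}·L_max^ε), where N_min := min{N₁, N₂,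 N₃} and L_max := max{L₁, L₂, L₃}. -/

import Mathlib

/-!
Since `τ₁ + τ₂ + τ₃ = 0`, the modulations `τ_j - λ(k_j)` add up to minus the resonance
`λ(k₁) + λ(k₂) + λ(k₃)`. When `k₁ + k₂ + k₃ = 0` its leading term `-β k |k|^{2m}` dominates, so for
large `N_max` the resonance is at least `c N_min N_max^{2m}`, and so is some `L_j N_j^δ`. Taking
`j₁ ≠ j` (and, when `j = 3`, `j₁` the one of the first two indices with the smaller `N`), a
`(b - ε)`- or `(1 - b - 2ε)`-power of this `L_j` pays for the positive powers of `N` on the left.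
In logarithmic coordinates each case is a linear inequality between exponents, which holds with
room to spare at `ε = 0` under the assumptions on `b`, hence for small `ε > 0`. Bounded `N_max` is
absorbed into `C`.
-/

/-- The Japanese bracket `⟨x⟩ = (1 + |x|²)^{1/2}`. -/
noncomputable def jbr (x : ℝ) : ℝ := Real.sqrt (1 + x ^ 2)

/-- A dyadic real number: a power of `2` that is `≥ 1`. -/
def IsDyadic (x : ℝ) : Prop := ∃ n : ℕ, x = 2 ^ n

open Real Filter Topology

namespace IsDyadic

variable {x : ℝ}

lemma one_le (h : IsDyadic x) : 1 ≤ x := by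
  obtain ⟨n, rfl⟩ := h
  exact one_le_pow₀ one_le_two

lemma pos (h : IsDyadic x) : 0 < x := zero_lt_one.trans_le h.one_le

lemma eq_one_or_two_le (h : IsDyadic x) : x = 1 ∨ 2 ≤ x := by
  obtain ⟨_ | n, rfl⟩ := h
  · exact Or.inl (pow_zero _)
  · exact Or.inr (le_self_pow₀ one_le_two n.succ_ne_zero)

end IsDyadic

def InDyadicAnnulus (N x : ℝ) : Prop :=
  (N = 1 → |x| ≤ 2) ∧ (2 ≤ N → N / 2 < |x| ∧ |x| < 2 * N)

namespace InDyadicAnnulus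

variable {N x : ℝ}

lemma abs_le (h : InDyadicAnnulus N x) (hN : IsDyadic N) : |x| ≤ 2 * N := by
  rcases hN.eq_one_or_two_le with rfl | hN2
  · simpa using h.1 rfl
  · exact (h.2 hN2).2.le

lemma le_two_mul_abs (h : InDyadicAnnulus N x) (hN : IsDyadic N) (hx : 1 ≤ |x|) :
    N ≤ 2 * |x| := by
  rcases hN.eq_one_or_two_le with rfl | hN2
  · linarith
  · linarith [(h.2 hN2).1]

end InDyadicAnnulus

lemma jbr_le_two_mul_abs {x : ℝ} (hx : 1 ≤ |x|) : jbr x ≤ 2 * |x| := by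
  refine Real.sqrt_le_iff.mpr ⟨by positivity, ?_⟩
  nlinarith [sq_abs x]

lemma log_max_le_add_add {a b c : ℝ} (ha : 1 ≤ a) (hb : 1 ≤ b) (hc : 1 ≤ c) :
    log (max a (max b c)) ≤ log a + log b + log c := by
  have hab := one_le_mul_of_one_le_of_one_le ha hb
  have hac := one_le_mul_of_one_le_of_one_le ha hc
  have hbc := one_le_mul_of_one_le_of_one_le hb hc
  rw [← log_mul (by positivity) (by positivity), ← log_mul (by positivity) (by positivity)]
  refine log_le_log (by positivity) (max_le ?_ (max_le ?_ ?_)) <;> nlinarith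

lemma rpow_add_one_tangent_le {p x t : ℝ} (hp : 0 ≤ p) (hx : 0 < x) (hxt : 0 ≤ x + t) :
    x ^ (p + 1) + (p + 1) * t * x ^ p ≤ (x + t) ^ (p + 1) := by
  have bernoulli : 1 + (p + 1) * (t / x) ≤ (1 + t / x) ^ (p + 1) :=
    one_add_mul_self_le_rpow_one_add (by rw [le_div_iff₀ hx]; linarith) (by linarith)
  have hxt' : x + t = (1 + t / x) * x := by field_simp
  have hbase : 0 ≤ 1 + t / x := by
    rw [← div_self hx.ne', ← add_div]; positivity
  rw [hxt', mul_rpow hbase hx.le, rpow_add_one hx.ne']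
  calc x ^ p * x + (p + 1) * t * x ^ p = (1 + (p + 1) * (t / x)) * (x ^ p * x) := by
        field_simp
    _ ≤ _ := mul_le_mul_of_nonneg_right bernoulli (by positivity)

noncomputable def powDefect (p A B : ℝ) : ℝ := (A + B) ^ (p + 1) - A ^ (p + 1) - B ^ (p + 1)

section powDefect

variable {p A B : ℝ}

lemma mul_mul_rpow_le_powDefect (hp : 0 ≤ p) (hA : 0 < A) (hB : 0 ≤ B) (hBA : B ≤ A) :
    p * B * A ^ p ≤ powDefect p A B := by
  have tangent := rpow_add_one_tangent_le hp hA (by linarith : 0 ≤ A + B)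
  have hBp : B ^ (p + 1) ≤ B * A ^ p := by
    rw [rpow_add_one' hB (by linarith), mul_comm]
    exact mul_le_mul_of_nonneg_left (rpow_le_rpow hB hBA hp) hB
  unfold powDefect
  linarith

lemma powDefect_le (hp : 0 ≤ p) (hA : 0 < A) (hB : 0 ≤ B) :
    powDefect p A B ≤ (p + 1) * B * (A + B) ^ p := by
  have tangent := rpow_add_one_tangent_le (t := -B) hp (by linarith : 0 < A + B) (by linarith)
  have hBp : 0 ≤ B ^ (p + 1) := by positivity
  rw [add_neg_cancel_right] at tangent
  unfold powDefect
  linarith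

end powDefect

noncomputable def dispersion (α β μ m r x : ℝ) : ℝ :=
  -β * x * |x| ^ (2 * m) + α * x * |x| ^ (2 * r) - 2 * μ * x

section dispersion

variable {α β μ m r : ℝ}

lemma dispersion_neg (x : ℝ) : dispersion α β μ m r (-x) = -dispersion α β μ m r x := by
  simp only [dispersion, abs_neg]
  ring

lemma dispersion_of_nonneg (hm : 0 ≤ m) (hr : 0 ≤ r) {x : ℝ} (hx : 0 ≤ x) :
    dispersion α β μ m r x = -β * x ^ (2 * m + 1) + α * x ^ (2 * r + 1) - 2 * μ * x := by
  rw [dispersion, abs_of_nonneg hx, rpow_add_one' hx (by linarith),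
    rpow_add_one' hx (by linarith)]
  ring

lemma dispersion_add_add_neg_neg (hm : 0 ≤ m) (hr : 0 ≤ r) {A B : ℝ} (hA : 0 ≤ A) (hB : 0 ≤ B) :
    dispersion α β μ m r (A + B) + dispersion α β μ m r (-A) + dispersion α β μ m r (-B)
      = -(β * powDefect (2 * m) A B - α * powDefect (2 * r) A B) := by
  rw [dispersion_neg, dispersion_neg, dispersion_of_nonneg hm hr hA, dispersion_of_nonneg hm hr hB,
    dispersion_of_nonneg hm hr (add_nonneg hA hB), powDefect, powDefect]
  ring

lemma exists_mul_mul_rpow_le_sub_powDefect (hα : 0 ≤ α) (hβ : 0 < β) (hr : 0 ≤ r) (hrm : r < m) :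
    ∃ K > 0, ∀ A B : ℝ, 0 ≤ B → B ≤ A → K ≤ A →
      m * β * B * A ^ (2 * m) ≤ β * powDefect (2 * m) A B - α * powDefect (2 * r) A B := by
  have hm : 0 < m := hr.trans_lt hrm
  obtain ⟨K, hK, hK0⟩ := (((tendsto_rpow_atTop (by linarith : 0 < 2 * m - 2 * r))
    |>.eventually_ge_atTop (α * (2 * r + 1) * 2 ^ (2 * r) / (m * β))).and
    (eventually_gt_atTop 0)).exists
  rw [div_le_iff₀' (by positivity)] at hK
  refine ⟨K, hK0, fun A B hB hBA hKA ↦ ?_⟩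
  have hA : 0 < A := hK0.trans_le hKA
  have hAB : (A + B) ^ (2 * r) ≤ 2 ^ (2 * r) * A ^ (2 * r) := by
    rw [← mul_rpow zero_le_two hA.le]
    exact rpow_le_rpow (by positivity) (by linarith) (by positivity)
  have hKA' : K ^ (2 * m - 2 * r) ≤ A ^ (2 * m - 2 * r) := rpow_le_rpow hK0.le hKA (by linarith)
  have hsplit : A ^ (2 * m) = A ^ (2 * m - 2 * r) * A ^ (2 * r) := by
    rw [← rpow_add hA, sub_add_cancel]
  have lower : 2 * m * B * A ^ (2 * m) ≤ powDefect (2 * m) A B :=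
    mul_mul_rpow_le_powDefect (by positivity) hA hB hBA
  have upper : α * powDefect (2 * r) A B ≤ m * β * B * A ^ (2 * m) :=
    calc α * powDefect (2 * r) A B ≤ α * ((2 * r + 1) * B * (A + B) ^ (2 * r)) :=
          mul_le_mul_of_nonneg_left (powDefect_le (by positivity) hA hB) hα
      _ ≤ α * (2 * r + 1) * 2 ^ (2 * r) * (B * A ^ (2 * r)) := by
          have := mul_le_mul_of_nonneg_left hAB (by positivity : 0 ≤ α * (2 * r + 1) * B)
          linarith
      _ ≤ m * β * K ^ (2 * m - 2 * r) * (B * A ^ (2 * r)) :=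
          mul_le_mul_of_nonneg_right hK (by positivity)
      _ ≤ m * β * A ^ (2 * m - 2 * r) * (B * A ^ (2 * r)) := by gcongr
      _ = m * β * B * A ^ (2 * m) := by rw [hsplit]; ring
  linarith [mul_le_mul_of_nonneg_left lower hβ.le]

lemma exists_eq_add_neg_neg {a b c : ℝ} (hsum : a + b + c = 0) (hba : |b| ≤ |a|)
    (hcb : |c| ≤ |b|) (ha : 0 ≤ a) :
    ∃ A B : ℝ, 0 ≤ B ∧ B ≤ A ∧ a = A + B ∧ b = -A ∧ c = -B := by
  rw [abs_of_nonneg ha] at hba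
  have hb : b ≤ 0 := by
    by_contra!
    cases abs_cases c <;> cases abs_cases b <;> linarith
  have hc : c ≤ 0 := by
    by_contra!
    cases abs_cases c <;> cases abs_cases b <;> linarith
  refine ⟨-b, -c, by linarith, ?_, by linarith, by ring, by ring⟩
  rwa [abs_of_nonpos hb, abs_of_nonpos hc] at hcb

lemma exists_le_abs_dispersion_add (hα : 0 ≤ α) (hβ : 0 < β) (hr : 0 ≤ r) (hrm : r < m) :
    ∃ K > 0, ∀ a b c : ℝ, a + b + c = 0 → 2 * K ≤ max |a| (max |b| |c|) →
      m * β * min |a| (min |b| |c|) * (max |a| (max |b| |c|) / 2) ^ (2 * m)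
        ≤ |dispersion α β μ m r a + dispersion α β μ m r b + dispersion α β μ m r c| := by
  have hm : 0 ≤ m := hr.trans hrm.le
  obtain ⟨K, hK0, hK⟩ := exists_mul_mul_rpow_le_sub_powDefect hα hβ hr hrm
  refine ⟨K, hK0, fun a b c hsum hmax ↦ ?_⟩
  wlog hba : |b| ≤ |a| generalizing a b c
  · have := this b a c (by linarith) (by rwa [max_left_comm]) (le_of_not_ge hba)
    rwa [min_left_comm, max_left_comm, add_comm (dispersion α β μ m r b)] at this
  wlog hca : |c| ≤ |a| generalizing a b c
  · have := this c a b (by linarith) (by rwa [max_comm, max_assoc])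
      (le_of_not_ge hca) (hba.trans (le_of_not_ge hca))
    convert this using 1 <;> ac_rfl
  wlog hcb : |c| ≤ |b| generalizing b c
  · have := this c b (by linarith) (by rwa [max_comm |c|]) hca hba (le_of_not_ge hcb)
    convert this using 1 <;> ac_rfl
  rw [max_eq_left (max_le hba hca), min_eq_right hcb, min_eq_right hca] at *
  wlog ha : 0 ≤ a generalizing a b c
  · have := this (-a) (-b) (-c) (by linarith) (by rwa [abs_neg]) (by rwa [abs_neg, abs_neg])
      (by rwa [abs_neg, abs_neg]) (by rwa [abs_neg, abs_neg]) (by linarith)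
    rwa [dispersion_neg, dispersion_neg, dispersion_neg, ← neg_add, ← neg_add, abs_neg, abs_neg,
      abs_neg] at this
  obtain ⟨A, B, hB, hBA, rfl, rfl, rfl⟩ := exists_eq_add_neg_neg hsum hba hcb ha
  rw [abs_neg, abs_of_nonneg hB, abs_of_nonneg ha] at *
  rw [dispersion_add_add_neg_neg hm hr (hB.trans hBA) hB, abs_neg]
  have hKA : K ≤ A := by linarith
  calc m * β * B * ((A + B) / 2) ^ (2 * m) ≤ m * β * B * A ^ (2 * m) := by
        gcongr
        linarith
    _ ≤ _ := (hK A B hB hBA hKA).trans (le_abs_self _)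

end dispersion

structure IsLocalizedTriple (lam : ℤ → ℝ) (δ : ℝ) (N L : Fin 3 → ℝ) (k : Fin 3 → ℤ)
    (τ : Fin 3 → ℝ) : Prop where
  dyadic_N : ∀ j, IsDyadic (N j)
  dyadic_L : ∀ j, IsDyadic (L j)
  ne_zero : ∀ j, k j ≠ 0
  sum_k : ∑ j, k j = 0
  sum_τ : ∑ j, τ j = 0
  annulus_k : ∀ j, InDyadicAnnulus (N j) (k j)
  annulus_mod : ∀ j, InDyadicAnnulus (L j) ((τ j - lam (k j)) / jbr (k j) ^ δ)

namespace IsLocalizedTriple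

variable {lam : ℤ → ℝ} {δ : ℝ} {N L : Fin 3 → ℝ} {k : Fin 3 → ℤ} {τ : Fin 3 → ℝ}

lemma one_le_abs (h : IsLocalizedTriple lam δ N L k τ) (j : Fin 3) : 1 ≤ |(k j : ℝ)| := by
  exact_mod_cast Int.one_le_abs (h.ne_zero j)

lemma le_two_mul_abs (h : IsLocalizedTriple lam δ N L k τ) (j : Fin 3) : N j ≤ 2 * |(k j : ℝ)| :=
  (h.annulus_k j).le_two_mul_abs (h.dyadic_N j) (h.one_le_abs j)

lemma abs_le (h : IsLocalizedTriple lam δ N L k τ) (j : Fin 3) : |(k j : ℝ)| ≤ 2 * N j :=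
  (h.annulus_k j).abs_le (h.dyadic_N j)

lemma abs_sub_le (h : IsLocalizedTriple lam δ N L k τ) (hδ0 : 0 ≤ δ) (hδ1 : δ ≤ 1) (j : Fin 3) :
    |τ j - lam (k j)| ≤ 8 * (L j * N j ^ δ) := by
  have hN := (h.dyadic_N j).pos
  have hjbr : 0 < jbr (k j) ^ δ := rpow_pos_of_pos (Real.sqrt_pos.mpr (by positivity)) δ
  have hmod := (h.annulus_mod j).abs_le (h.dyadic_L j)
  rw [abs_div, abs_of_pos hjbr, div_le_iff₀ hjbr] at hmod
  have hjbr_le : jbr (k j) ^ δ ≤ 4 * N j ^ δ :=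
    calc jbr (k j) ^ δ ≤ (4 * N j) ^ δ := by
          gcongr
          · exact Real.sqrt_nonneg _
          · linarith [jbr_le_two_mul_abs (h.one_le_abs j), h.abs_le j]
      _ = 4 ^ δ * N j ^ δ := mul_rpow (by norm_num) hN.le
      _ ≤ 4 ^ (1 : ℝ) * N j ^ δ :=
          mul_le_mul_of_nonneg_right (rpow_le_rpow_of_exponent_le (by norm_num) hδ1) (by positivity)
      _ = 4 * N j ^ δ := by rw [rpow_one]
  nlinarith [(h.dyadic_L j).pos, rpow_pos_of_pos hN δ]

lemma cast_add_add_eq_zero (h : IsLocalizedTriple lam δ N L k τ) :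
    (k 0 : ℝ) + k 1 + k 2 = 0 := by
  exact_mod_cast Fin.sum_univ_three k ▸ h.sum_k

lemma max_le_eight_mul (h : IsLocalizedTriple lam δ N L k τ) :
    max (N 0) (max (N 1) (N 2)) ≤ 8 * max (N 0) (N 1) := by
  have h0 := le_max_left (N 0) (N 1)
  have h1 := le_max_right (N 0) (N 1)
  have hk2 : |(k 2 : ℝ)| ≤ |(k 0 : ℝ)| + |(k 1 : ℝ)| := by
    rw [show (k 2 : ℝ) = -(k 0 + k 1) by linarith [h.cast_add_add_eq_zero], abs_neg]
    exact abs_add_le _ _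
  have hN0 := (h.dyadic_N 0).pos
  refine max_le (by linarith) (max_le (by linarith) ?_)
  linarith [h.le_two_mul_abs 2, h.abs_le 0, h.abs_le 1]

lemma min_div_two_le (h : IsLocalizedTriple lam δ N L k τ) :
    min (N 0) (min (N 1) (N 2)) / 2 ≤ min |(k 0 : ℝ)| (min |(k 1 : ℝ)| |(k 2 : ℝ)|) := by
  have h0 : min (N 0) (min (N 1) (N 2)) ≤ N 0 := min_le_left _ _
  have h1 : min (N 0) (min (N 1) (N 2)) ≤ N 1 := (min_le_right _ _).trans (min_le_left _ _)
  have h2 : min (N 0) (min (N 1) (N 2)) ≤ N 2 := (min_le_right _ _).trans (min_le_right _ _)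
  refine le_min ?_ (le_min ?_ ?_) <;>
    linarith [h.le_two_mul_abs 0, h.le_two_mul_abs 1, h.le_two_mul_abs 2]

lemma max_div_two_le (h : IsLocalizedTriple lam δ N L k τ) :
    max (N 0) (max (N 1) (N 2)) / 2 ≤ max |(k 0 : ℝ)| (max |(k 1 : ℝ)| |(k 2 : ℝ)|) := by
  rw [div_le_iff₀ two_pos, mul_comm, mul_max_of_nonneg _ _ two_pos.le,
    mul_max_of_nonneg _ _ two_pos.le]
  exact max_le_max (h.le_two_mul_abs 0) (max_le_max (h.le_two_mul_abs 1) (h.le_two_mul_abs 2))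

lemma abs_add_add_le (h : IsLocalizedTriple lam δ N L k τ) (hδ0 : 0 ≤ δ) (hδ1 : δ ≤ 1) {j : Fin 3}
    (hj : ∀ i, L i * N i ^ δ ≤ L j * N j ^ δ) :
    |lam (k 0) + lam (k 1) + lam (k 2)| ≤ 24 * (L j * N j ^ δ) := by
  have hsum : lam (k 0) + lam (k 1) + lam (k 2)
      = -((τ 0 - lam (k 0)) + (τ 1 - lam (k 1)) + (τ 2 - lam (k 2))) := by
    linarith [Fin.sum_univ_three τ ▸ h.sum_τ]
  rw [hsum, abs_neg]
  refine (abs_add_three _ _ _).trans ?_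
  linarith [h.abs_sub_le hδ0 hδ1 0, h.abs_sub_le hδ0 hδ1 1, h.abs_sub_le hδ0 hδ1 2,
    hj 0, hj 1, hj 2]

end IsLocalizedTriple

lemma exists_modulation_lower_bound {α β μ m r δ : ℝ} {lam : ℤ → ℝ} (hα : 0 ≤ α) (hβ : 0 < β)
    (hr : 0 ≤ r) (hrm : r < m) (hδ0 : 0 ≤ δ) (hδ1 : δ ≤ 1)
    (hlam : ∀ k : ℤ, lam k = dispersion α β μ m r k) :
    ∃ K > 0, ∀ N L k τ, IsLocalizedTriple lam δ N L k τ →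
      4 * K ≤ max (N 0) (max (N 1) (N 2)) →
      ∃ j, m * β / (48 * 4 ^ (2 * m)) * min (N 0) (min (N 1) (N 2))
        * max (N 0) (max (N 1) (N 2)) ^ (2 * m) ≤ L j * N j ^ δ := by
  obtain ⟨K, hK0, hK⟩ := exists_le_abs_dispersion_add (μ := μ) hα hβ hr hrm
  refine ⟨K, hK0, fun N L k τ h hKN ↦ ?_⟩
  obtain ⟨j, hj⟩ := Finite.exists_max fun j ↦ L j * N j ^ δ
  refine ⟨j, ?_⟩
  set Nmin := min (N 0) (min (N 1) (N 2))
  set Nmax := max (N 0) (max (N 1) (N 2))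
  have hm : 0 ≤ m := hr.trans hrm.le
  have hNmin : 0 ≤ Nmin := le_min (h.dyadic_N 0).pos.le <|
    le_min (h.dyadic_N 1).pos.le (h.dyadic_N 2).pos.le
  have hNmax : 0 ≤ Nmax := by linarith
  have hkmin := h.min_div_two_le
  have hkmax := h.max_div_two_le
  calc m * β / (48 * 4 ^ (2 * m)) * Nmin * Nmax ^ (2 * m)
      = m * β * (Nmin / 2) * (Nmax / 2 / 2) ^ (2 * m) / 24 := by
        rw [div_div, div_rpow (by positivity) (by norm_num), show (2 : ℝ) * 2 = 4 by norm_num]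
        field_simp
        ring
    _ ≤ m * β * min |(k 0 : ℝ)| (min |(k 1 : ℝ)| |(k 2 : ℝ)|)
          * (max |(k 0 : ℝ)| (max |(k 1 : ℝ)| |(k 2 : ℝ)|) / 2) ^ (2 * m) / 24 := by
        gcongr
    _ ≤ |lam (k 0) + lam (k 1) + lam (k 2)| / 24 := by
        rw [hlam, hlam, hlam]
        gcongr
        exact hK _ _ _ h.cast_add_add_eq_zero (by linarith)
    _ ≤ L j * N j ^ δ := by linarith [h.abs_add_add_le hδ0 hδ1 hj]

/-- The last two conditions say that the resonance gain beats the loss in the exponents when the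
largest `L_j N_j^δ` sits at index `0` or `1`, respectively at index `2`. -/
structure SmallExponent (δ m b ε : ℝ) : Prop where
  pos : 0 < ε
  two_mul_le_sub_half : 2 * ε ≤ b - 1 / 2
  two_mul_le_one_sub : 2 * ε ≤ 1 - b
  resonance_first_two : b + ε * (1 - δ + 2 * m) ≤ 2 * m * b
  resonance_last :
    b + ε - δ * (b - 1 / 2) + (1 - b - 2 * ε) * δ + 1 / 2 + ε
      ≤ δ / 2 + (2 * m + 1) * (1 - b - 2 * ε)

lemma exists_smallExponent {δ m b : ℝ} (hm : 1 / 2 < m) (hδ1 : δ ≤ 1) (hb1 : 1 / 2 < b) (hb : b < 1)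
    (hb2 : b * (2 * m - δ + 1) < 2 * m - 1 / 2) : ∃ ε, SmallExponent δ m b ε := by
  have hbδ : b * (1 - δ) ≤ 1 - δ := mul_le_of_le_one_left (by linarith) hb.le
  have h1 : ∀ᶠ ε in 𝓝 (0 : ℝ), 2 * ε < b - 1 / 2 :=
    ContinuousAt.eventually_lt (by fun_prop) (by fun_prop) (by linarith)
  have h2 : ∀ᶠ ε in 𝓝 (0 : ℝ), 2 * ε < 1 - b :=
    ContinuousAt.eventually_lt (by fun_prop) (by fun_prop) (by linarith)
  have h3 : ∀ᶠ ε in 𝓝 (0 : ℝ), b + ε * (1 - δ + 2 * m) < 2 * m * b :=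
    ContinuousAt.eventually_lt (by fun_prop) (by fun_prop) (by nlinarith)
  have h4 : ∀ᶠ ε in 𝓝 (0 : ℝ), b + ε - δ * (b - 1 / 2) + (1 - b - 2 * ε) * δ + 1 / 2 + ε
      < δ / 2 + (2 * m + 1) * (1 - b - 2 * ε) :=
    ContinuousAt.eventually_lt (by fun_prop) (by fun_prop) (by nlinarith)
  obtain ⟨ε, ⟨h1, h2, h3, h4⟩, hε⟩ :=
    (((h1.and (h2.and (h3.and h4))).filter_mono nhdsWithin_le_nhds).and
      (self_mem_nhdsWithin : ∀ᶠ ε in 𝓝[>] (0 : ℝ), 0 < ε)).exists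
  exact ⟨ε, hε, h1.le, h2.le, h3.le, h4.le⟩

namespace SmallExponent

variable {δ m b ε : ℝ}

lemma exponent_nonneg (hε : SmallExponent δ m b ε) (hδ1 : δ ≤ 1) : 0 ≤ b + ε - δ * (b - 1 / 2) := by
  have := hε.pos
  have := hε.two_mul_le_sub_half
  nlinarith

/- The "reduced" bound
`N 2 ^ s * N_min ^ (1/2 + ε) ≤ C * N i ^ (δ/2) * L i ^ (b - ε) * L 2 ^ (1 - b - 2ε)`
in logarithms, where `s` is the exponent of `N 2` and `i` is the index in `{0, 1}` other than `j₁`;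
by `le_of_reduced` it implies the bound for `j₁`. -/
lemma reduced_of_small (hε : SmallExponent δ m b ε) (hδ0 : 0 ≤ δ) (hδ1 : δ ≤ 1)
    {x₂ xm xi yi y₂ κ C : ℝ} (hx₂ : x₂ ≤ κ) (hxm0 : 0 ≤ xm) (hxm : xm ≤ κ) (hxi : 0 ≤ xi)
    (hyi : 0 ≤ yi) (hy₂ : 0 ≤ y₂) (hC : 3 * κ ≤ C) :
    (b + ε - δ * (b - 1 / 2)) * x₂ + (1 / 2 + ε) * xm
      ≤ C + δ / 2 * xi + (b - ε) * yi + (1 - b - 2 * ε) * y₂ := by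
  have := hε.pos
  have := hε.two_mul_le_sub_half
  have := hε.two_mul_le_one_sub
  have hs := hε.exponent_nonneg hδ1
  have hκ : 0 ≤ κ := hxm0.trans hxm
  have := mul_le_mul_of_nonneg_left hx₂ hs
  have := mul_le_mul_of_nonneg_left hxm (by linarith : 0 ≤ 1 / 2 + ε)
  have := mul_le_mul_of_nonneg_right (by nlinarith :
    b + ε - δ * (b - 1 / 2) + (1 / 2 + ε) ≤ 3) hκ
  have := mul_nonneg hδ0 hxi
  have := mul_nonneg (by linarith : 0 ≤ b - ε) hyi
  have := mul_nonneg (by linarith : 0 ≤ 1 - b - 2 * ε) hy₂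
  linarith

lemma reduced_of_resonance_first_two (hε : SmallExponent δ m b ε) (hδ0 : 0 ≤ δ) (hδ1 : δ ≤ 1)
    {x₂ xm xM xi yi y₂ c₀ C : ℝ} (hx₂ : x₂ ≤ xM) (hxi : xi ≤ xM) (hxm : 0 ≤ xm) (hxM : 0 ≤ xM)
    (hy₂ : 0 ≤ y₂) (hres : xm + 2 * m * xM ≤ c₀ + yi + δ * xi) (hc₀ : 0 ≤ c₀) (hC : c₀ ≤ C) :
    (b + ε - δ * (b - 1 / 2)) * x₂ + (1 / 2 + ε) * xm
      ≤ C + δ / 2 * xi + (b - ε) * yi + (1 - b - 2 * ε) * y₂ := by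
  have := hε.pos
  have := hε.two_mul_le_sub_half
  have := hε.two_mul_le_one_sub
  have := hε.resonance_first_two
  have := mul_le_mul_of_nonneg_left hres (by linarith : 0 ≤ b - ε)
  have := mul_le_mul_of_nonneg_left hx₂ (hε.exponent_nonneg hδ1)
  have := mul_le_mul_of_nonneg_left hxi (by nlinarith : 0 ≤ δ * (b - ε - 1 / 2))
  nlinarith

lemma reduced_of_resonance_last (hε : SmallExponent δ m b ε) (hδ0 : 0 ≤ δ) (hδ1 : δ ≤ 1)
    {x₂ xm xM xi yi y₂ c₀ c₈ C : ℝ} (hx₂ : x₂ ≤ xM) (hxm0 : 0 ≤ xm) (hxm : xm ≤ xM)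
    (hxi : xM ≤ xi + c₈) (hyi : 0 ≤ yi) (hres : xm + 2 * m * xM ≤ c₀ + y₂ + δ * x₂)
    (hc₀ : 0 ≤ c₀) (hc₈ : 0 ≤ c₈) (hC : c₀ + c₈ ≤ C) :
    (b + ε - δ * (b - 1 / 2)) * x₂ + (1 / 2 + ε) * xm
      ≤ C + δ / 2 * xi + (b - ε) * yi + (1 - b - 2 * ε) * y₂ := by
  have := hε.pos
  have := hε.two_mul_le_sub_half
  have := hε.two_mul_le_one_sub
  have := hε.resonance_last
  have := mul_le_mul_of_nonneg_left hres (by linarith : 0 ≤ 1 - b - 2 * ε)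
  have := mul_le_mul_of_nonneg_left hx₂
    (by nlinarith [hε.exponent_nonneg hδ1] : 0 ≤ b + ε - δ * (b - 1 / 2) + (1 - b - 2 * ε) * δ)
  have := mul_le_mul_of_nonneg_left hxm (by linarith : 0 ≤ b - 1 / 2 + 3 * ε)
  have := mul_le_mul_of_nonneg_left hxi (by linarith : 0 ≤ δ / 2)
  nlinarith

lemma le_of_reduced (hε : SmallExponent δ m b ε) {x₂ xm xj xi yj yi y₂ yM C : ℝ}
    (h : (b + ε - δ * (b - 1 / 2)) * x₂ + (1 / 2 + ε) * xm
      ≤ C + δ / 2 * xi + (b - ε) * yi + (1 - b - 2 * ε) * y₂)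
    (hyM : yM ≤ yj + yi + y₂) :
    (b + ε - δ * (b - 1 / 2)) * x₂ + (1 / 2 + ε) * xm + δ / 2 * xj + (b - ε) * yj + ε * yM
      ≤ C + δ / 2 * (xj + xi) + b * (yj + yi) + (1 - b - ε) * y₂ := by
  nlinarith [hε.pos]

lemma exists_log_bound (hε : SmallExponent δ m b ε) (hδ0 : 0 ≤ δ) (hδ1 : δ ≤ 1)
    {x y : Fin 3 → ℝ} {xm xM yM κ c₀ c₈ C : ℝ}
    (hxm0 : 0 ≤ xm) (hxm : ∀ j, xm ≤ x j) (hxM : ∀ j, x j ≤ xM) (hy : ∀ j, 0 ≤ y j)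
    (hyM : yM ≤ y 0 + y 1 + y 2) (hpair : xM ≤ x 0 + c₈ ∨ xM ≤ x 1 + c₈)
    (hres : κ ≤ xM → ∃ j, xm + 2 * m * xM ≤ c₀ + y j + δ * x j)
    (hc₀ : 0 ≤ c₀) (hc₈ : 0 ≤ c₈) (hC₁ : c₀ + c₈ ≤ C) (hC₂ : 3 * κ ≤ C) :
    ∃ j₁, (b + ε - δ * (b - 1 / 2)) * x 2 + (1 / 2 + ε) * xm + δ / 2 * x j₁ + (b - ε) * y j₁
        + ε * yM ≤ C + δ / 2 * (x 0 + x 1) + b * (y 0 + y 1) + (1 - b - ε) * y 2 := by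
  have hxM0 : 0 ≤ xM := hxm0.trans ((hxm 0).trans (hxM 0))
  by_cases hlarge : κ ≤ xM
  · match hres hlarge with
    | ⟨0, hj⟩ =>
      refine ⟨1, ?_⟩
      linarith [hε.le_of_reduced (xj := x 1) (yj := y 1) (yM := yM)
        (hε.reduced_of_resonance_first_two hδ0 hδ1 (hxM 2) (hxM 0) hxm0 hxM0 (hy 2) hj hc₀
          ((le_add_of_nonneg_right hc₈).trans hC₁)) (by linarith)]
    | ⟨1, hj⟩ =>
      refine ⟨0, ?_⟩
      linarith [hε.le_of_reduced (xj := x 0) (yj := y 0) (yM := yM)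
        (hε.reduced_of_resonance_first_two hδ0 hδ1 (hxM 2) (hxM 1) hxm0 hxM0 (hy 2) hj hc₀
          ((le_add_of_nonneg_right hc₈).trans hC₁)) (by linarith)]
    | ⟨2, hj⟩ =>
      rcases hpair with h | h
      · refine ⟨1, ?_⟩
        linarith [hε.le_of_reduced (xj := x 1) (yj := y 1) (yM := yM)
          (hε.reduced_of_resonance_last hδ0 hδ1 (hxM 2) hxm0 ((hxm 0).trans (hxM 0)) h (hy 0) hj
            hc₀ hc₈ hC₁) (by linarith)]
      · refine ⟨0, ?_⟩
        linarith [hε.le_of_reduced (xj := x 0) (yj := y 0) (yM := yM)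
          (hε.reduced_of_resonance_last hδ0 hδ1 (hxM 2) hxm0 ((hxm 0).trans (hxM 0)) h (hy 1) hj
            hc₀ hc₈ hC₁) (by linarith)]
  · replace hlarge := not_le.mp hlarge
    refine ⟨0, ?_⟩
    linarith [hε.le_of_reduced (xj := x 0) (yj := y 0) (yM := yM)
      (hε.reduced_of_small hδ0 hδ1 ((hxM 2).trans hlarge.le) hxm0
        ((hxm 0).trans ((hxM 0).trans hlarge.le)) (hxm0.trans (hxm 1)) (hy 1) (hy 2) hC₂)
      (by linarith)]

end SmallExponent

lemma IsLocalizedTriple.exists_log_bound {lam : ℤ → ℝ} {δ m b ε : ℝ} {N L : Fin 3 → ℝ}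
    {k : Fin 3 → ℤ} {τ : Fin 3 → ℝ} (h : IsLocalizedTriple lam δ N L k τ)
    (hε : SmallExponent δ m b ε) (hδ0 : 0 ≤ δ) (hδ1 : δ ≤ 1) {K c₀ C : ℝ} (hK : 0 < K)
    (hc₀ : 0 < c₀)
    (hres : 4 * K ≤ max (N 0) (max (N 1) (N 2)) →
      ∃ j, c₀ * min (N 0) (min (N 1) (N 2)) * max (N 0) (max (N 1) (N 2)) ^ (2 * m)
        ≤ L j * N j ^ δ)
    (hC₁ : |log c₀| + log 8 ≤ C) (hC₂ : 3 * log (4 * K) ≤ C) :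
    ∃ j₁, (b + ε - δ * (b - 1 / 2)) * log (N 2) + (1 / 2 + ε) * log (min (N 0) (min (N 1) (N 2)))
        + δ / 2 * log (N j₁) + (b - ε) * log (L j₁) + ε * log (max (L 0) (max (L 1) (L 2)))
      ≤ C + δ / 2 * (log (N 0) + log (N 1)) + b * (log (L 0) + log (L 1))
        + (1 - b - ε) * log (L 2) := by
  have hN j : 1 ≤ N j := (h.dyadic_N j).one_le
  have hL j : 1 ≤ L j := (h.dyadic_L j).one_le
  have hNmin : 1 ≤ min (N 0) (min (N 1) (N 2)) := le_min (hN 0) (le_min (hN 1) (hN 2))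
  have hNmin_le j : min (N 0) (min (N 1) (N 2)) ≤ N j := by
    fin_cases j <;> simp
  have hle_Nmax j : N j ≤ max (N 0) (max (N 1) (N 2)) := by
    fin_cases j <;> simp
  have hNmax : 0 < max (N 0) (max (N 1) (N 2)) := by linarith [hN 0, hle_Nmax 0]
  refine hε.exists_log_bound (x := fun j ↦ log (N j)) (y := fun j ↦ log (L j))
    (κ := log (4 * K)) (c₀ := |log c₀|) hδ0 hδ1 (log_nonneg hNmin)
    (fun j ↦ log_le_log (by linarith) (hNmin_le j)) (fun j ↦ log_le_log (by linarith [hN j])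
    (hle_Nmax j)) (fun j ↦ log_nonneg (hL j)) ?_ ?_ ?_ (abs_nonneg _) (log_nonneg (by norm_num))
    hC₁ hC₂
  · exact log_max_le_add_add (hL 0) (hL 1) (hL 2)
  · have h8 := h.max_le_eight_mul
    have hlog i (hi : max (N 0) (N 1) = N i) :
        log (max (N 0) (max (N 1) (N 2))) ≤ log (N i) + log 8 := by
      rw [add_comm, ← log_mul (by norm_num) (by linarith [hN i]), ← hi]
      exact log_le_log hNmax h8
    rcases max_choice (N 0) (N 1) with hmax | hmax
    · exact Or.inl (hlog 0 hmax)
    · exact Or.inr (hlog 1 hmax)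
  · intro hlarge
    obtain ⟨j, hj⟩ := hres ((log_le_log_iff (by positivity) hNmax).mp hlarge)
    have := hN j
    have := hL j
    have := log_le_log (by positivity) hj
    rw [log_mul (by positivity) (by positivity), log_mul (by positivity) (by positivity),
      log_mul (by positivity) (by positivity), log_rpow hNmax, log_rpow (by positivity)] at this
    exact ⟨j, by linarith [neg_abs_le (log c₀)]⟩

lemma div_le_exp_div_of_log_le {N L : Fin 3 → ℝ} (hN : ∀ j, 0 < N j) (hL : ∀ j, 0 < L j)
    {j₁ : Fin 3} {s δ b b' ε C : ℝ}
    (h : s * log (N 2) + (1 / 2 + ε) * log (min (N 0) (min (N 1) (N 2))) + δ / 2 * log (N j₁)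
        + b' * log (L j₁) + ε * log (max (L 0) (max (L 1) (L 2)))
      ≤ C + δ / 2 * (log (N 0) + log (N 1)) + b * (log (L 0) + log (L 1))
        + (1 - b - ε) * log (L 2)) :
    N 2 ^ s / (N 0 ^ (δ / 2) * N 1 ^ (δ / 2) * L 0 ^ b * L 1 ^ b * L 2 ^ (1 - b - ε))
      ≤ exp C / (min (N 0) (min (N 1) (N 2)) ^ (1 / 2 + ε) * N j₁ ^ (δ / 2) * L j₁ ^ b'
        * max (L 0) (max (L 1) (L 2)) ^ ε) := by
  have := hN 0
  have := hN 1
  have := hN 2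
  have := hN j₁
  have := hL 0
  have := hL 1
  have := hL 2
  have := hL j₁
  rw [div_le_div_iff₀ (by positivity) (by positivity),
    ← log_le_log_iff (by positivity) (by positivity)]
  simp (disch := positivity) only [log_mul, log_rpow, log_exp]
  linarith

theorem dyadic_multiplier_bound_general
    (α β μ m r δ b : ℝ) (hα : 0 < α) (hβ : 0 < β) (hm : 1 / 2 < m) (hr : 0 < r) (hrm : r < m)
    (hδ0 : 0 < δ) (hδ1 : δ ≤ 1)
    (hb1 : 1 / 2 < b) (hb2 : b < min 1 ((2 * m - 1 / 2) / (2 * m - δ + 1)))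
    (lam : ℤ → ℝ)
    (hlam : ∀ k : ℤ, lam k =
      -β * (k : ℝ) * |(k : ℝ)| ^ (2 * m) + α * (k : ℝ) * |(k : ℝ)| ^ (2 * r) - 2 * μ * (k : ℝ)) :
    ∃ ε : ℝ, 0 < ε ∧ ε < 1 / 2 ∧ ∃ C > 0,
      ∀ (N L : Fin 3 → ℝ) (k : Fin 3 → ℤ) (τ : Fin 3 → ℝ),
        (∀ j, IsDyadic (N j)) → (∀ j, IsDyadic (L j)) →
        (∀ j, k j ≠ 0) → (∑ j, k j) = 0 → (∑ j, τ j) = 0 →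
        (∀ j, (N j = 1 → |((k j : ℤ) : ℝ)| ≤ 2) ∧
          (2 ≤ N j → N j / 2 < |((k j : ℤ) : ℝ)| ∧ |((k j : ℤ) : ℝ)| < 2 * N j)) →
        (∀ j, (L j = 1 → |(τ j - lam (k j)) / jbr ((k j : ℤ) : ℝ) ^ δ| ≤ 2) ∧
          (2 ≤ L j → L j / 2 < |(τ j - lam (k j)) / jbr ((k j : ℤ) : ℝ) ^ δ| ∧
            |(τ j - lam (k j)) / jbr ((k j : ℤ) : ℝ) ^ δ| < 2 * L j)) →
        ∃ j₁ : Fin 3, ∃ b' : ℝ, 1 / 2 < b' ∧ b' ≤ b ∧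
          N 2 ^ (1 - δ * (b - 1 / 2) - 1 + b + ε) /
              (N 0 ^ (δ / 2) * N 1 ^ (δ / 2) * L 0 ^ b * L 1 ^ b * L 2 ^ (1 - b - ε))
            ≤ C / (min (N 0) (min (N 1) (N 2)) ^ (1 / 2 + ε) * N j₁ ^ (δ / 2)
                * L j₁ ^ b' * max (L 0) (max (L 1) (L 2)) ^ ε) := by
  obtain ⟨hb, hb'⟩ := lt_min_iff.mp hb2
  rw [lt_div_iff₀ (by linarith)] at hb'
  obtain ⟨ε, hε⟩ := exists_smallExponent hm hδ1 hb1 hb hb'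
  obtain ⟨K, hK, hres⟩ := exists_modulation_lower_bound hα.le hβ hr.le hrm hδ0.le hδ1 hlam
  set c₀ := m * β / (48 * 4 ^ (2 * m))
  have hc₀ : 0 < c₀ := by have := hr.trans hrm; positivity
  have hlog8 : 0 ≤ log 8 := log_nonneg (by norm_num)
  refine ⟨ε, hε.pos, by linarith [hε.two_mul_le_one_sub],
    exp (|log c₀| + log 8 + 3 * |log (4 * K)|), exp_pos _,
    fun N L k τ hN hL hk hks hτs hNk hLk ↦ ?_⟩
  have h : IsLocalizedTriple lam δ N L k τ := ⟨hN, hL, hk, hks, hτs, hNk, hLk⟩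
  obtain ⟨j₁, hj₁⟩ := h.exists_log_bound (C := |log c₀| + log 8 + 3 * |log (4 * K)|) hε hδ0.le
    hδ1 hK hc₀ (hres N L k τ h) (by linarith [abs_nonneg (log (4 * K))])
    (by linarith [le_abs_self (log (4 * K)), abs_nonneg (log c₀)])
  exact ⟨j₁, b - ε, by linarith [hε.pos, hε.two_mul_le_sub_half], by linarith [hε.pos],
    div_le_exp_div_of_log_le (fun j ↦ (hN j).pos) (fun j ↦ (hL j).pos) (by linarith)⟩

/-- dyadic multiplier bound for the bilinear estimate.  Assume `0 < δ ≤ 1`,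
`2m > 2 - δ`, `1/2 < b < min{1, (2m - 1/2)/(2m - δ + 1)}`.  Then there are `ε ∈ (0,1/2)`
and `C > 0` such that for all dyadic `N_j, L_j` localizing the frequencies `k_j` and the
modulations `(τ_j - λ_{k_j})/⟨k_j⟩^δ` of a frequency triple (`k₁+k₂+k₃ = 0`, `k_j ≠ 0`,
`τ₁+τ₂+τ₃ = 0`), there exist `j₁` and `b' ∈ (1/2, b]` with
`N₃^{1-δ(b-1/2)-1+b+ε}/(N₁^{δ/2} N₂^{δ/2} L₁^b L₂^b L₃^{1-b-ε})
  ≤ C/(N_min^{1/2+ε} N_{j₁}^{δ/2} L_{j₁}^{b'} L_max^ε)`. -/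
theorem dyadic_multiplier_bound
    (α β μ m r δ b : ℝ) (hα : 0 < α) (hβ : 0 < β) (hm : 1 / 2 < m) (hr : 0 < r) (hrm : r < m)
    (hδ0 : 0 < δ) (hδ1 : δ ≤ 1) (h2m : 2 * m > 2 - δ)
    (hb1 : 1 / 2 < b) (hb2 : b < min 1 ((2 * m - 1 / 2) / (2 * m - δ + 1)))
    (lam : ℤ → ℝ)
    (hlam : ∀ k : ℤ, lam k =
      -β * (k : ℝ) * |(k : ℝ)| ^ (2 * m) + α * (k : ℝ) * |(k : ℝ)| ^ (2 * r) - 2 * μ * (k : ℝ)) :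
    ∃ ε : ℝ, 0 < ε ∧ ε < 1 / 2 ∧ ∃ C > 0,
      ∀ (N L : Fin 3 → ℝ) (k : Fin 3 → ℤ) (τ : Fin 3 → ℝ),
        (∀ j, IsDyadic (N j)) → (∀ j, IsDyadic (L j)) →
        (∀ j, k j ≠ 0) → (∑ j, k j) = 0 → (∑ j, τ j) = 0 →
        (∀ j, (N j = 1 → |((k j : ℤ) : ℝ)| ≤ 2) ∧
          (2 ≤ N j → N j / 2 < |((k j : ℤ) : ℝ)| ∧ |((k j : ℤ) : ℝ)| < 2 * N j)) →
        (∀ j, (L j = 1 → |(τ j - lam (k j)) / jbr ((k j : ℤ) : ℝ) ^ δ| ≤ 2) ∧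
          (2 ≤ L j → L j / 2 < |(τ j - lam (k j)) / jbr ((k j : ℤ) : ℝ) ^ δ| ∧
            |(τ j - lam (k j)) / jbr ((k j : ℤ) : ℝ) ^ δ| < 2 * L j)) →
        ∃ j₁ : Fin 3, ∃ b' : ℝ, 1 / 2 < b' ∧ b' ≤ b ∧
          N 2 ^ (1 - δ * (b - 1 / 2) - 1 + b + ε) /
              (N 0 ^ (δ / 2) * N 1 ^ (δ / 2) * L 0 ^ b * L 1 ^ b * L 2 ^ (1 - b - ε))
            ≤ C / (min (N 0) (min (N 1) (N 2)) ^ (1 / 2 + ε) * N j₁ ^ (δ / 2)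
                * L j₁ ^ b' * max (L 0) (max (L 1) (L 2)) ^ ε) :=
  dyadic_multiplier_bound_general α β μ m r δ b hα hβ hm hr hrm hδ0 hδ1 hb1 hb2 lam hlam
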